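/- Let m be a basic probability assignment on a finite nonempty set Θ such that there exists A ⊆ Θ with m(A) > 0 and |A| > 1, and suppose there is an integer k such that every focal element of m has cardinality 1 or k (i.e., m(A) > 0 implies |A| = 1 or |A| = k). Then the intersection probability coincides with the pignistic function: for every x ∈ Θ, p[Bel](x) = BetP[Bel](x) = ∑_{A⊆Θ : x∈A} m(A)/|A|. -/

import Mathlib

open Finset

/-- A basic probability assignment on a finite set `Θ`. -/
def IsBPA {Θ : Type*} [Fintype Θ] (m : Finset Θ → ℝ) : Prop :=
  m ∅ = 0 ∧ (∀ A, 0 ≤ m A) ∧ (∑ A : Finset Θ, m A) = 1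

/-- Belief function `Bel(A) = ∑_{B ⊆ A} m(B)`. -/
noncomputable def Bel {Θ : Type*} [Fintype Θ] [DecidableEq Θ] (m : Finset Θ → ℝ)
    (A : Finset Θ) : ℝ :=
  ∑ B ∈ A.powerset, m B

/-- Plausibility function `Pl(A) = ∑_{B ∩ A ≠ ∅} m(B)`. -/
noncomputable def Pl {Θ : Type*} [Fintype Θ] [DecidableEq Θ] (m : Finset Θ → ℝ)
    (A : Finset Θ) : ℝ :=
  ∑ B ∈ Finset.univ.filter (fun B => B ∩ A ≠ ∅), m B

/-- Total mass of singletons `k_Bel`. -/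
noncomputable def kBel {Θ : Type*} [Fintype Θ] (m : Finset Θ → ℝ) : ℝ :=
  ∑ x : Θ, m {x}

/-- Total plausibility of singletons `k_Pl`. -/
noncomputable def kPl {Θ : Type*} [Fintype Θ] [DecidableEq Θ] (m : Finset Θ → ℝ) : ℝ :=
  ∑ x : Θ, Pl m {x}

/-- `β[Bel] = (1 - k_Bel)/(k_Pl - k_Bel)`. -/
noncomputable def betaBel {Θ : Type*} [Fintype Θ] [DecidableEq Θ] (m : Finset Θ → ℝ) : ℝ :=
  (1 - kBel m) / (kPl m - kBel m)

/-- The intersection probability `p[Bel](x) = m(x) + β[Bel]⬝(Pl(x) - m(x))`. -/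
noncomputable def pInt {Θ : Type*} [Fintype Θ] [DecidableEq Θ] (m : Finset Θ → ℝ)
    (x : Θ) : ℝ :=
  m {x} + betaBel m * (Pl m {x} - m {x})

/-- The pignistic function `BetP[Bel](x) = ∑_{A ∋ x} m(A)/|A|`. -/
noncomputable def betP {Θ : Type*} [Fintype Θ] [DecidableEq Θ]
    (m : Finset Θ → ℝ) (x : Θ) : ℝ :=
  ∑ A ∈ Finset.univ.filter (fun A : Finset Θ => x ∈ A), m A / (A.card : ℝ)

/-!
When every focal element has size `1` or `k`, each focal element of size `k` contributes
`k` times its mass to `k_Pl` and nothing to `k_Bel`, so `k_Pl - k_Bel = k (1 - k_Bel)` and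
`β[Bel] = 1/k`. Then `p[Bel](x) = m(x) + (1/k) ∑_{A ∋ x, A ≠ {x}} m(A)`, and the non-singleton
focal elements through `x` are exactly those of size `k`, which is `BetP[Bel](x)`.
-/

theorem kBel_eq_sum_card_eq_one {Θ : Type*} [Fintype Θ] (m : Finset Θ → ℝ) :
    kBel m = ∑ B ∈ univ.filter (fun B : Finset Θ => B.card = 1), m B := by
  refine Finset.sum_bij (fun x _ => ({x} : Finset Θ)) (by simp)
    (fun x _ y _ h => singleton_injective h) (fun B hB => ?_) (fun _ _ => rfl)
  obtain ⟨a, rfl⟩ := card_eq_one.mp (mem_filter.mp hB).2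
  exact ⟨a, mem_univ a, rfl⟩

theorem one_sub_kBel_eq_sum_card_ne_one {Θ : Type*} [Fintype Θ] {m : Finset Θ → ℝ}
    (hsum : ∑ A, m A = 1) :
    1 - kBel m = ∑ B ∈ univ.filter (fun B : Finset Θ => B.card ≠ 1), m B := by
  rw [kBel_eq_sum_card_eq_one, ← hsum, ← sum_filter_add_sum_filter_not univ (·.card = 1)]
  ring

theorem one_sub_kBel_pos {Θ : Type*} [Fintype Θ] {m : Finset Θ → ℝ} (hnn : ∀ A, 0 ≤ m A)
    (hsum : ∑ A, m A = 1) {A : Finset Θ} (hA : 0 < m A) (hAcard : A.card ≠ 1) :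
    0 < 1 - kBel m := by
  rw [one_sub_kBel_eq_sum_card_ne_one hsum]
  exact sum_pos' (fun B _ => hnn B) ⟨A, by simpa using hAcard, hA⟩

section

variable {Θ : Type*} [Fintype Θ] [DecidableEq Θ]

theorem Pl_singleton (m : Finset Θ → ℝ) (x : Θ) :
    Pl m {x} = ∑ B ∈ univ.filter (fun B : Finset Θ => x ∈ B), m B := by
  refine sum_congr (filter_congr fun B _ => ?_) fun _ _ => rfl
  simp [← nonempty_iff_ne_empty, Finset.Nonempty]

theorem kPl_eq_sum_card_mul (m : Finset Θ → ℝ) : kPl m = ∑ B, (B.card : ℝ) * m B := by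
  simp_rw [kPl, Pl_singleton, sum_filter]
  rw [sum_comm]
  refine sum_congr rfl fun B _ => ?_
  rw [sum_ite_mem, univ_inter, sum_const, nsmul_eq_mul]

theorem kPl_sub_kBel_eq_mul {m : Finset Θ → ℝ} (hsum : ∑ A, m A = 1) {k : ℕ}
    (hk : ∀ A, m A ≠ 0 → A.card = 1 ∨ A.card = k) :
    kPl m - kBel m = k * (1 - kBel m) := by
  rw [one_sub_kBel_eq_sum_card_ne_one hsum, kPl_eq_sum_card_mul, kBel_eq_sum_card_eq_one,
    sum_filter, sum_filter, ← sum_sub_distrib, mul_sum]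
  refine sum_congr rfl fun B _ => ?_
  by_cases h0 : m B = 0
  · simp [h0]
  rcases hk B h0 with h | h
  · simp [h]
  · by_cases h1 : B.card = 1
    · simp [h1]
    · simp [h1, ← h]

theorem betaBel_eq_inv {m : Finset Θ → ℝ} (hsum : ∑ A, m A = 1) {k : ℕ}
    (hk : ∀ A, m A ≠ 0 → A.card = 1 ∨ A.card = k) (hpos : 1 - kBel m ≠ 0) :
    betaBel m = (k : ℝ)⁻¹ := by
  rw [betaBel, kPl_sub_kBel_eq_mul hsum hk, div_mul_cancel_right₀ hpos]

theorem pInt_eq_betP_of_betaBel_eq_inv {m : Finset Θ → ℝ} {k : ℕ}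
    (hk : ∀ A, m A ≠ 0 → A.card = 1 ∨ A.card = k) (hβ : betaBel m = (k : ℝ)⁻¹) (x : Θ) :
    pInt m x = betP m x := by
  have hx : {x} ∈ univ.filter (fun B : Finset Θ => x ∈ B) := by simp
  rw [pInt, betP, Pl_singleton, hβ, ← add_sum_erase _ _ hx, ← add_sum_erase _ _ hx,
    add_sub_cancel_left, card_singleton, Nat.cast_one, div_one, mul_sum]
  refine congrArg _ (sum_congr rfl fun B hB => ?_)
  obtain ⟨hBx, hxB⟩ : B ≠ {x} ∧ x ∈ B := by simpa using hB
  by_cases h0 : m B = 0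
  · simp [h0]
  rcases hk B h0 with h | h
  · obtain ⟨a, rfl⟩ := card_eq_one.mp h
    exact absurd (by rw [mem_singleton.mp hxB]) hBx
  · rw [h, div_eq_inv_mul]

end

theorem pInt_eq_betP_of_focal_sizes_one_or_k_general
    {Θ : Type*} [Fintype Θ] [DecidableEq Θ]
    (m : Finset Θ → ℝ) (hm : IsBPA m)
    (hnonBayes : ∃ A : Finset Θ, 0 < m A ∧ 1 < A.card)
    (hk : ∃ k : ℕ, ∀ A : Finset Θ, 0 < m A → A.card = 1 ∨ A.card = k) :
    ∀ x : Θ, pInt m x = betP m x := by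
  obtain ⟨-, hnn, hsum⟩ := hm
  obtain ⟨A, hA, hAcard⟩ := hnonBayes
  obtain ⟨k, hk⟩ := hk
  have hfocal : ∀ B, m B ≠ 0 → B.card = 1 ∨ B.card = k :=
    fun B hB => hk B ((hnn B).lt_of_ne' hB)
  have hpos := one_sub_kBel_pos hnn hsum hA hAcard.ne'
  exact pInt_eq_betP_of_betaBel_eq_inv hfocal (betaBel_eq_inv hsum hfocal hpos.ne')

/-- Theorem 6: if `m` has some focal element of size `> 1` and all its
focal elements have cardinality 1 or `k`, then the intersection probability coincides
with the pignistic function. -/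
theorem pInt_eq_betP_of_focal_sizes_one_or_k
    {Θ : Type*} [Fintype Θ] [DecidableEq Θ] [Nonempty Θ]
    (m : Finset Θ → ℝ) (hm : IsBPA m)
    (hnonBayes : ∃ A : Finset Θ, 0 < m A ∧ 1 < A.card)
    (hk : ∃ k : ℕ, ∀ A : Finset Θ, 0 < m A → A.card = 1 ∨ A.card = k) :
    ∀ x : Θ, pInt m x = betP m x :=
  pInt_eq_betP_of_focal_sizes_one_or_k_general m hm hnonBayes hk
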